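/- arXiv:2012.09959 — 8 statements merged into one kernel-verified Lean document; each statement's English description precedes it below -/
import Mathlib

section
/- Let N be a finite set of nodes and P a family of measurement paths, each path p ∈ P being a subset of N ∪ M (a path 'fails' under a failure set F ⊆ N iff p ∩ F ≠ ∅). Define a set S ⊆ N to be k-identifiable if for all F₁, F₂ ⊆ N with |F₁| ≤ k, |F₂| ≤ k, and F₁ ∩ S ≠ F₂ ∩ S, there exists p ∈ P with exactly one of p ∩ F₁ = ∅ and p ∩ F₂ = ∅. Theorem (sufficiency): if for every F ⊆ N with |F| ≤ k and every v ∈ S \ F there exists p ∈ P with v ∈ p and p ∩ F = ∅, then S is k-identifiable. -/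
variable {V : Type*} [DecidableEq V]

/-- A set `S` of non-monitors is `k`-identifiable: any two failure sets of size at most `k`
that differ within `S` are distinguished by the failure state of some path. -/
def kIdent (N : Finset V) (P : Set (Finset V)) (S : Finset V) (k : ℕ) : Prop :=
  ∀ F₁ F₂ : Finset V, F₁ ⊆ N → F₂ ⊆ N → F₁.card ≤ k → F₂.card ≤ k →
    F₁ ∩ S ≠ F₂ ∩ S → ∃ p ∈ P, Xor' (p ∩ F₁ = ∅) (p ∩ F₂ = ∅)

theorem xor_inter_eq_empty_of_mem {p F G : Finset V} {v : V} (hvp : v ∈ p) (hvF : v ∈ F)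
    (hpG : p ∩ G = ∅) : Xor (p ∩ F = ∅) (p ∩ G = ∅) :=
  Or.inr ⟨hpG, Finset.nonempty_iff_ne_empty.mp ⟨v, Finset.mem_inter.mpr ⟨hvp, hvF⟩⟩⟩

theorem exists_mem_inter_notMem_of_inter_ne {F₁ F₂ S : Finset V} (hne : F₁ ∩ S ≠ F₂ ∩ S) :
    ∃ v ∈ S, (v ∈ F₁ ∧ v ∉ F₂) ∨ (v ∈ F₂ ∧ v ∉ F₁) := by
  by_contra! hall
  refine hne (Finset.ext fun v => ?_)
  have := hall v
  simp only [Finset.mem_inter]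
  tauto

theorem abstract_sufficiency_general (N S : Finset V) (P : Set (Finset V)) (k : ℕ)
    (h : ∀ F : Finset V, F ⊆ N → F.card ≤ k → ∀ v ∈ S \ F, ∃ p ∈ P, v ∈ p ∧ p ∩ F = ∅) :
    kIdent N P S k := by
  intro F₁ F₂ h₁ h₂ hc₁ hc₂ hne
  obtain ⟨v, hvS, ⟨hv₁, hv₂⟩ | ⟨hv₂, hv₁⟩⟩ := exists_mem_inter_notMem_of_inter_ne hne
  · obtain ⟨p, hpP, hvp, hp₂⟩ := h F₂ h₂ hc₂ v (Finset.mem_sdiff.mpr ⟨hvS, hv₂⟩)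
    exact ⟨p, hpP, xor_inter_eq_empty_of_mem hvp hv₁ hp₂⟩
  · obtain ⟨p, hpP, hvp, hp₁⟩ := h F₁ h₁ hc₁ v (Finset.mem_sdiff.mpr ⟨hvS, hv₁⟩)
    exact ⟨p, hpP, Or.symm (xor_inter_eq_empty_of_mem hvp hv₂ hp₁)⟩

theorem abstract_sufficiency (N S : Finset V) (P : Set (Finset V)) (k : ℕ) (hS : S ⊆ N)
    (h : ∀ F : Finset V, F ⊆ N → F.card ≤ k → ∀ v ∈ S \ F, ∃ p ∈ P, v ∈ p ∧ p ∩ F = ∅) :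
    kIdent N P S k :=
  abstract_sufficiency_general N S P k h
end

section
/- Let N be a finite set of non-monitors and P a family of paths (node sets). For v ∈ N let P_v := { p ∈ P : v ∈ p }. Theorem (UP sufficiency): if for every v ∈ S and every W ⊆ N \ {v} with |W| ≤ k, P_v is not contained in ⋃_{w ∈ W} P_w, then S is k-identifiable. -/
variable {V : Type*} [DecidableEq V]

/-! If `F₁` and `F₂` differ at some `v ∈ S`, say `v ∈ F₁ \ F₂`, then `F₂` is a set of at most `k`
nodes other than `v`, so by hypothesis some path through `v` avoids `F₂`. That path fails under
`F₁` but not under `F₂`. -/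

theorem Finset.exists_mem_of_inter_ne_inter {α : Type*} [DecidableEq α] {s t u : Finset α}
    (h : s ∩ u ≠ t ∩ u) : ∃ v ∈ u, (v ∈ s ∧ v ∉ t) ∨ (v ∈ t ∧ v ∉ s) := by
  contrapose! h
  ext v
  simp only [Finset.mem_inter]
  have := h v
  tauto

theorem xor_inter_eq_empty_of_mem_of_disjoint {p F₁ F₂ : Finset V} {v : V}
    (hvp : v ∈ p) (hvF₁ : v ∈ F₁) (hpF₂ : Disjoint p F₂) :
    Xor' (p ∩ F₁ = ∅) (p ∩ F₂ = ∅) :=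
  Or.inr ⟨Finset.disjoint_iff_inter_eq_empty.mp hpF₂,
    Finset.nonempty_iff_ne_empty.mp ⟨v, Finset.mem_inter.mpr ⟨hvp, hvF₁⟩⟩⟩

theorem exists_path_mem_disjoint {N : Finset V} {P : Set (Finset V)} {k : ℕ} {v : V}
    (hv : ∀ W : Finset V, W ⊆ N.erase v → W.card ≤ k → ¬ (∀ p ∈ P, v ∈ p → ∃ w ∈ W, w ∈ p))
    {F : Finset V} (hFN : F ⊆ N) (hFk : F.card ≤ k) (hvF : v ∉ F) :
    ∃ p ∈ P, v ∈ p ∧ Disjoint p F := by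
  have := hv F (Finset.subset_erase.mpr ⟨hFN, hvF⟩) hFk
  push Not at this
  obtain ⟨p, hpP, hvp, hpF⟩ := this
  exact ⟨p, hpP, hvp, Finset.disjoint_left.mpr fun w hwp hwF => hpF w hwF hwp⟩

theorem UP_sufficiency_general (N S : Finset V) (P : Set (Finset V)) (k : ℕ)
    (h : ∀ v ∈ S, ∀ W : Finset V, W ⊆ N.erase v → W.card ≤ k →
      ¬ (∀ p ∈ P, v ∈ p → ∃ w ∈ W, w ∈ p)) :
    kIdent N P S k := by
  intro F₁ F₂ hF₁N hF₂N hF₁k hF₂k hne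
  obtain ⟨v, hvS, ⟨hvF₁, hvF₂⟩ | ⟨hvF₂, hvF₁⟩⟩ := Finset.exists_mem_of_inter_ne_inter hne
  · obtain ⟨p, hpP, hvp, hpF₂⟩ := exists_path_mem_disjoint (h v hvS) hF₂N hF₂k hvF₂
    exact ⟨p, hpP, xor_inter_eq_empty_of_mem_of_disjoint hvp hvF₁ hpF₂⟩
  · obtain ⟨p, hpP, hvp, hpF₁⟩ := exists_path_mem_disjoint (h v hvS) hF₁N hF₁k hvF₁
    exact ⟨p, hpP, (xor_inter_eq_empty_of_mem_of_disjoint hvp hvF₂ hpF₁).symm⟩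

theorem UP_sufficiency (N S : Finset V) (P : Set (Finset V)) (k : ℕ) (hS : S ⊆ N)
    (h : ∀ v ∈ S, ∀ W : Finset V, W ⊆ N.erase v → W.card ≤ k →
      ¬ (∀ p ∈ P, v ∈ p → ∃ w ∈ W, w ∈ p)) :
    kIdent N P S k :=
  UP_sufficiency_general N S P k h
end

section
/- Let N be a finite set of non-monitors with σ = |N|, and P a family of paths. Define MSC(v) as the minimum cardinality of a set W ⊆ N \ {v} with P_v ⊆ ⋃_{w ∈ W} P_w, where MSC(v) := σ if no such W exists, and define Ω(v) as the largest k ≤ σ such that {v} is k-identifiable (Ω(v) := 0 if {v} is not even 1-identifiable). Theorem: if P_v ≠ ∅ and MSC(v) ≤ σ − 1, then MSC(v) − 1 ≤ Ω(v) ≤ MSC(v). -/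
/-!
A set `W ⊆ N \ {v}` that covers every path through `v` cannot tell the failure sets `W` and
`insert v W` apart, since every path through `v` already fails under `W`; a minimum cover therefore
shows that `{v}` is not `(MSC v + 1)`-identifiable. Conversely, if `F₁ ∋ v` and `F₂ ∌ v` with
`|F₂| < MSC v`, then `F₂` is not a cover, so some path through `v` avoids `F₂` and fails under
`F₁` only.
-/

variable {V : Type*} [DecidableEq V]

open scoped Classical

/-- `W ⊆ N \ {v}` covers the paths through `v`. -/
def Covers (N : Finset V) (P : Set (Finset V)) (v : V) (W : Finset V) : Prop :=
  W ⊆ N.erase v ∧ ∀ p ∈ P, v ∈ p → ∃ w ∈ W, w ∈ p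

/-- Minimum set cover number of the paths through `v` by path sets of other non-monitors;
equals `σ = |N|` when no cover exists. -/
noncomputable def MSC (N : Finset V) (P : Set (Finset V)) (v : V) : ℕ :=
  if ∃ W : Finset V, Covers N P v W
  then sInf {n | ∃ W : Finset V, Covers N P v W ∧ W.card = n}
  else N.card

/-- The maximum identifiability of `v`: the largest `k ≤ σ` such that `{v}` is
`k`-identifiable (note `0`-identifiability always holds). -/
noncomputable def Omega (N : Finset V) (P : Set (Finset V)) (v : V) : ℕ :=
  sSup {k | k ≤ N.card ∧ kIdent N P {v} k}

section

variable {N : Finset V} {P : Set (Finset V)} {v : V} {W : Finset V} {k : ℕ}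

theorem MSC_le_card_of_covers (h : Covers N P v W) : MSC N P v ≤ W.card := by
  rw [MSC, if_pos ⟨W, h⟩]
  exact Nat.sInf_le ⟨W, h, rfl⟩

theorem exists_covers_card_eq_MSC (h : ∃ W, Covers N P v W) :
    ∃ W, Covers N P v W ∧ W.card = MSC N P v := by
  obtain ⟨W, hW⟩ := h
  have hmem := Nat.sInf_mem (s := {n | ∃ W, Covers N P v W ∧ W.card = n}) ⟨W.card, W, hW, rfl⟩
  rwa [MSC, if_pos ⟨W, hW⟩]

theorem MSC_le_card : MSC N P v ≤ N.card := by
  by_cases h : ∃ W, Covers N P v W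
  · obtain ⟨W, hW⟩ := h
    exact (MSC_le_card_of_covers hW).trans
      (Finset.card_le_card (hW.1.trans (Finset.erase_subset v N)))
  · rw [MSC, if_neg h]

theorem kIdent_zero (S : Finset V) : kIdent N P S 0 := by
  intro F₁ F₂ _ _ h₁ h₂ hne
  rw [Finset.card_eq_zero.mp (Nat.le_zero.mp h₁), Finset.card_eq_zero.mp (Nat.le_zero.mp h₂)]
    at hne
  exact absurd rfl hne

theorem le_Omega (hkN : k ≤ N.card) (hk : kIdent N P {v} k) : k ≤ Omega N P v :=
  le_csSup ⟨N.card, fun _ hk => hk.1⟩ ⟨hkN, hk⟩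

theorem Omega_le {m : ℕ} (h : ∀ k ≤ N.card, kIdent N P {v} k → k ≤ m) : Omega N P v ≤ m :=
  csSup_le ⟨0, Nat.zero_le _, kIdent_zero _⟩ fun k hk => h k hk.1 hk.2

theorem exists_path_xor_of_not_covers {F₁ F₂ : Finset V} (hF₂ : F₂ ⊆ N) (hv₁ : v ∈ F₁)
    (hv₂ : v ∉ F₂) (hcov : ¬ Covers N P v F₂) :
    ∃ p ∈ P, Xor' (p ∩ F₁ = ∅) (p ∩ F₂ = ∅) := by
  simp only [Covers, Finset.subset_erase.mpr ⟨hF₂, hv₂⟩, true_and, not_forall, not_exists,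
    not_and] at hcov
  obtain ⟨p, hp, hvp, hpF₂⟩ := hcov
  refine ⟨p, hp, Or.inr ⟨?_, ?_⟩⟩
  · exact Finset.disjoint_iff_inter_eq_empty.mp (Finset.disjoint_right.mpr hpF₂)
  · exact Finset.nonempty_iff_ne_empty.mp ⟨v, Finset.mem_inter.mpr ⟨hvp, hv₁⟩⟩

theorem kIdent_singleton_of_forall_not_covers
    (h : ∀ W : Finset V, W.card ≤ k → ¬ Covers N P v W) : kIdent N P {v} k := by
  intro F₁ F₂ hF₁ hF₂ hc₁ hc₂ hne
  by_cases hv₁ : v ∈ F₁ <;> by_cases hv₂ : v ∈ F₂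
  · simp [Finset.inter_singleton_of_mem, hv₁, hv₂] at hne
  · exact exists_path_xor_of_not_covers hF₂ hv₁ hv₂ (h F₂ hc₂)
  · obtain ⟨p, hp, hxor⟩ := exists_path_xor_of_not_covers hF₁ hv₂ hv₁ (h F₁ hc₁)
    exact ⟨p, hp, hxor.symm⟩
  · simp [Finset.inter_singleton_of_notMem, hv₁, hv₂] at hne

theorem kIdent_singleton_of_lt_MSC (hk : k < MSC N P v) : kIdent N P {v} k :=
  kIdent_singleton_of_forall_not_covers fun _ hW hcov =>
    (hk.trans_le ((MSC_le_card_of_covers hcov).trans hW)).false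

theorem not_kIdent_singleton_of_covers (hv : v ∈ N) (hW : Covers N P v W) (hk : W.card < k) :
    ¬ kIdent N P {v} k := by
  have hWN : W ⊆ N := hW.1.trans (Finset.erase_subset v N)
  have hvW : v ∉ W := fun h => Finset.notMem_erase v N (hW.1 h)
  intro hid
  obtain ⟨p, hp, hxor⟩ := hid (insert v W) W (Finset.insert_subset hv hWN) hWN
    (by rw [Finset.card_insert_of_notMem hvW]; omega) hk.le
    (by simp [Finset.inter_singleton_of_notMem, hvW])
  by_cases hvp : v ∈ p
  · obtain ⟨w, hw, hwp⟩ := hW.2 p hp hvp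
    have hmeets : ∀ F, w ∈ F → p ∩ F ≠ ∅ := fun F hwF =>
      Finset.nonempty_iff_ne_empty.mp ⟨w, Finset.mem_inter.mpr ⟨hwp, hwF⟩⟩
    exact hxor.elim (fun h => hmeets _ (Finset.mem_insert_of_mem hw) h.1)
      (fun h => hmeets W hw h.1)
  · rw [Finset.inter_insert_of_notMem hvp] at hxor
    exact (xor_self _ ▸ hxor : False)

theorem MSC_sub_one_le_Omega : MSC N P v - 1 ≤ Omega N P v := by
  rcases Nat.eq_zero_or_pos (MSC N P v) with h | h
  · simp [h]
  · exact le_Omega (MSC_le_card.trans' (Nat.sub_le _ _)) (kIdent_singleton_of_lt_MSC (by omega))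

theorem Omega_le_MSC (hv : v ∈ N) : Omega N P v ≤ MSC N P v := by
  refine Omega_le fun k hkN hk => ?_
  by_cases hcov : ∃ W, Covers N P v W
  · obtain ⟨W, hW, hWcard⟩ := exists_covers_card_eq_MSC hcov
    by_contra! hlt
    exact not_kIdent_singleton_of_covers hv hW (hWcard ▸ hlt) hk
  · -- without any cover, `MSC` takes its default value `|N|`
    rwa [MSC, if_neg hcov]

end

theorem Omega_bounds_general (N : Finset V) (P : Set (Finset V)) (v : V) (hv : v ∈ N) :
    MSC N P v - 1 ≤ Omega N P v ∧ Omega N P v ≤ MSC N P v :=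
  ⟨MSC_sub_one_le_Omega, Omega_le_MSC hv⟩

theorem Omega_bounds (N : Finset V) (P : Set (Finset V)) (v : V) (hv : v ∈ N)
    (hPv : ∃ p ∈ P, v ∈ p) (hMSC : MSC N P v ≤ N.card - 1) :
    MSC N P v - 1 ≤ Omega N P v ∧ Omega N P v ≤ MSC N P v :=
  Omega_bounds_general N P v hv
end

section
/- Let N be a finite set of non-monitors with σ = |N| and P a family of paths. Then S ⊆ N is σ-identifiable if and only if every v ∈ S lies on a path p ∈ P with p ∩ N = {v} (i.e., v is the only non-monitor on p). -/
variable {V : Type*} [DecidableEq V]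

/-! A path whose only non-monitor is `v` fails under a failure set `F ⊆ N` exactly when
`v ∈ F`. Hence such paths for all `v ∈ S` separate any two failure sets that differ on `S`,
whatever their size. Conversely, take the failure sets `N \ {v}` and `N` (both of size
`≤ |N|`): a path failing under exactly one of them must fail under `N` only, so it meets `N`
and meets it in `v` alone. -/

namespace Finset

theorem inter_eq_empty_iff_notMem_of_inter_eq_singleton {p N F : Finset V} {v : V}
    (hp : p ∩ N = {v}) (hF : F ⊆ N) : p ∩ F = ∅ ↔ v ∉ F := by
  have : p ∩ F = {v} ∩ F := by rw [← hp, inter_assoc, inter_eq_right.mpr hF]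
  rw [this, ← disjoint_iff_inter_eq_empty, disjoint_singleton_left]

theorem inter_eq_singleton_of_inter_erase_eq_empty {p N : Finset V} {v : V}
    (hv : p ∩ N.erase v = ∅) (hN : p ∩ N ≠ ∅) : p ∩ N = {v} := by
  rw [inter_erase, erase_eq_empty_iff] at hv
  exact hv.resolve_left hN

theorem exists_mem_not_iff_of_inter_ne {F₁ F₂ S : Finset V} (h : F₁ ∩ S ≠ F₂ ∩ S) :
    ∃ v ∈ S, ¬(v ∈ F₁ ↔ v ∈ F₂) := by
  contrapose! h
  ext v
  by_cases hv : v ∈ S <;> simp [hv, h v]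

end Finset

open Finset

theorem kIdent_of_forall_exists_inter_eq_singleton {N S : Finset V} {P : Set (Finset V)}
    (h : ∀ v ∈ S, ∃ p ∈ P, p ∩ N = {v}) (k : ℕ) : kIdent N P S k := by
  intro F₁ F₂ hF₁ hF₂ _ _ hne
  obtain ⟨v, hvS, hv⟩ := exists_mem_not_iff_of_inter_ne hne
  obtain ⟨p, hpP, hp⟩ := h v hvS
  refine ⟨p, hpP, ?_⟩
  rw [Xor', xor_iff_not_iff, inter_eq_empty_iff_notMem_of_inter_eq_singleton hp hF₁,
    inter_eq_empty_iff_notMem_of_inter_eq_singleton hp hF₂, not_iff_not]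
  exact hv

theorem kIdent.exists_inter_eq_singleton {N S : Finset V} {P : Set (Finset V)} {k : ℕ}
    (h : kIdent N P S k) (hk : N.card ≤ k) {v : V} (hvS : v ∈ S) (hvN : v ∈ N) :
    ∃ p ∈ P, p ∩ N = {v} := by
  have hne : N.erase v ∩ S ≠ N ∩ S := fun heq => by
    simpa using congrArg (v ∈ ·) heq |>.mpr (mem_inter.mpr ⟨hvN, hvS⟩)
  obtain ⟨p, hpP, ⟨herase, hN⟩ | ⟨hN, herase⟩⟩ :=
    h _ _ (erase_subset v N) Subset.rfl (card_erase_le.trans hk) hk hne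
  · exact ⟨p, hpP, inter_eq_singleton_of_inter_erase_eq_empty herase hN⟩
  · have : p ∩ N.erase v ⊆ p ∩ N := inter_subset_inter_left (erase_subset v N)
    exact absurd (subset_empty.mp (hN ▸ this)) herase

theorem sigma_identifiable_iff (N S : Finset V) (P : Set (Finset V)) (hS : S ⊆ N) :
    kIdent N P S N.card ↔ ∀ v ∈ S, ∃ p ∈ P, v ∈ p ∧ p ∩ N = {v} := by
  constructor
  · intro h v hv
    obtain ⟨p, hpP, hp⟩ := h.exists_inter_eq_singleton le_rfl hv (hS hv)
    exact ⟨p, hpP, mem_of_mem_inter_left (hp ▸ mem_singleton_self v), hp⟩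
  · intro h
    exact kIdent_of_forall_exists_inter_eq_singleton
      (fun v hv => (h v hv).imp fun _ ⟨hpP, _, hp⟩ => ⟨hpP, hp⟩) _
end

section
/- Let G be a finite simple connected graph with vertex set V, monitor set M ⊆ V, non-monitors N = V \ M, σ = |N|. Under the CSP probing mechanism, the measurement paths are all simple paths in G whose two endpoints are distinct monitors and whose internal vertices are non-monitors. Theorem: S ⊆ N is σ-identifiable under CSP if and only if every node in S has at least two neighbors in M. -/
variable {V : Type*} [Fintype V] [DecidableEq V]

/-- A CSP measurement path: a simple path whose endpoints are two distinct monitors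
and whose internal vertices are all non-monitors. -/
def IsCSPPath (G : SimpleGraph V) (M : Finset V) {a b : V} (p : G.Walk a b) : Prop :=
  p.IsPath ∧ a ∈ M ∧ b ∈ M ∧ a ≠ b ∧ ∀ x ∈ p.support, x ≠ a → x ≠ b → x ∉ M

/-- \`S\` (a set of non-monitors) is \`k\`-identifiable under CSP: any two failure sets of
non-monitors of size at most \`k\` that differ within \`S\` yield different failure states
on some CSP path (a path fails iff it contains a failed node). -/
def cspIdent (G : SimpleGraph V) (M : Finset V) (S : Finset V) (k : ℕ) : Prop :=
  ∀ F₁ F₂ : Finset V, F₁ ⊆ Mᶜ → F₂ ⊆ Mᶜ → F₁.card ≤ k → F₂.card ≤ k →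
    F₁ ∩ S ≠ F₂ ∩ S → ∃ (a b : V) (p : G.Walk a b), IsCSPPath G M p ∧
      Xor' (∀ x ∈ p.support, x ∉ F₁) (∀ x ∈ p.support, x ∉ F₂)

/-- Auxiliary: if `v` has two monitor neighbors, lies in `F₁` but not `F₂` (and `F₂` avoids
monitors), then some CSP path misses `F₂` but hits `F₁`. -/
lemma csp_aux (G : SimpleGraph V) [DecidableRel G.Adj] (M : Finset V) (F₁ F₂ : Finset V) (hF₂ : F₂ ⊆ Mᶜ)
    (v : V) (hvM : v ∉ M) (hnb : 2 ≤ (G.neighborFinset v ∩ M).card)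
    (hv1 : v ∈ F₁) (hv2 : v ∉ F₂) :
    ∃ (a b : V) (p : G.Walk a b), IsCSPPath G M p ∧
      (∀ x ∈ p.support, x ∉ F₂) ∧ ¬ (∀ x ∈ p.support, x ∉ F₁) := by
  obtain ⟨a, ha, b, hb, hab⟩ := Finset.one_lt_card.mp hnb
  rw [Finset.mem_inter, SimpleGraph.mem_neighborFinset] at ha hb
  have haM := ha.2
  have hbM := hb.2
  have hva : G.Adj v a := ha.1
  have hvb : G.Adj v b := hb.1
  have hav : a ≠ v := fun h => hvM (h ▸ haM)
  have hbv : b ≠ v := fun h => hvM (h ▸ hbM)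
  refine ⟨a, b, SimpleGraph.Walk.cons hva.symm (SimpleGraph.Walk.cons hvb SimpleGraph.Walk.nil),
    ⟨?_, haM, hbM, hab, ?_⟩, ?_, ?_⟩
  · rw [SimpleGraph.Walk.isPath_def]
    simp [hav, hab, hbv.symm, Ne.symm hav]
  · intro x hx hxa hxb
    simp only [SimpleGraph.Walk.support_cons, SimpleGraph.Walk.support_nil,
      List.mem_cons, List.mem_singleton] at hx
    rcases hx with rfl | rfl | rfl | h
    · exact absurd rfl hxa
    · exact hvM
    · exact absurd rfl hxb
    · cases h
  · intro x hx
    simp only [SimpleGraph.Walk.support_cons, SimpleGraph.Walk.support_nil,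
      List.mem_cons, List.mem_singleton] at hx
    rcases hx with rfl | rfl | rfl | h
    · exact fun h => (Finset.mem_compl.mp (hF₂ h)) haM
    · exact hv2
    · exact fun h => (Finset.mem_compl.mp (hF₂ h)) hbM
    · cases h
  · intro h
    exact h v (by simp) hv1

theorem sigma_identifiable_CSP_iff (G : SimpleGraph V) [DecidableRel G.Adj]
    (hG : G.Connected) (M S : Finset V) (hS : S ⊆ Mᶜ) :
    cspIdent G M S (Mᶜ.card) ↔ ∀ v ∈ S, 2 ≤ (G.neighborFinset v ∩ M).card := by
  constructor
  · intro hid v hv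
    by_contra hc
    push_neg at hc
    have hvM : v ∉ M := Finset.mem_compl.mp (hS hv)
    have hne : (Mᶜ : Finset V) ∩ S ≠ (Mᶜ.erase v) ∩ S := by
      intro h
      have hmem : v ∈ (Mᶜ : Finset V) ∩ S := by
        simp [Finset.mem_inter, hvM, hv]
      rw [h] at hmem
      simp at hmem
    obtain ⟨a, b, p, ⟨hp, haM, hbM, hab, hint⟩, hxor⟩ :=
      hid Mᶜ (Mᶜ.erase v) subset_rfl (Finset.erase_subset _ _) le_rfl
        (Finset.card_le_card (Finset.erase_subset _ _)) hne
    rcases hxor with ⟨h1, h2⟩ | ⟨h1, h2⟩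
    · exact h2 (fun x hx hxe => h1 x hx (Finset.mem_of_mem_erase hxe))
    · push_neg at h2
      obtain ⟨x, hx, hxMc⟩ := h2
      -- every vertex of the support is a, b, or v
      have hsub : ∀ y ∈ p.support, y = a ∨ y = b ∨ y = v := by
        intro y hy
        by_cases hya : y = a
        · exact Or.inl hya
        by_cases hyb : y = b
        · exact Or.inr (Or.inl hyb)
        have hyM : y ∉ M := hint y hy hya hyb
        rcases eq_or_ne y v with rfl | hyv
        · exact Or.inr (Or.inr rfl)
        · exact absurd (Finset.mem_erase.mpr ⟨hyv, Finset.mem_compl.mpr hyM⟩) (h1 y hy)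
      have hxv : x = v := by
        rcases hsub x hx with rfl | rfl | rfl
        · exact absurd haM (Finset.mem_compl.mp hxMc)
        · exact absurd hbM (Finset.mem_compl.mp hxMc)
        · rfl
      subst hxv
      have hva : x ≠ a := fun h => hvM (h ▸ haM)
      have hvb : x ≠ b := fun h => hvM (h ▸ hbM)
      -- the support is exactly {a, x, b}, so p has length 2
      have hnodup : p.support.Nodup := hp.support_nodup
      have hcard3 : ({a, x, b} : Finset V).card = 3 :=
        Finset.card_eq_three.mpr ⟨a, x, b, Ne.symm hva, hab, hvb, rfl⟩
      have hsubf : p.support.toFinset ⊆ {a, x, b} := by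
        intro y hy
        rcases hsub y (List.mem_toFinset.mp hy) with rfl | rfl | rfl <;> simp
      have hsupf : ({a, x, b} : Finset V) ⊆ p.support.toFinset := by
        intro y hy
        simp only [Finset.mem_insert, Finset.mem_singleton] at hy
        rcases hy with rfl | rfl | rfl
        · exact List.mem_toFinset.mpr p.start_mem_support
        · exact List.mem_toFinset.mpr hx
        · exact List.mem_toFinset.mpr p.end_mem_support
      have hlen3 : p.support.length = 3 := by
        have h1' : p.support.toFinset = {a, x, b} :=
          Finset.Subset.antisymm hsubf hsupf
        have := List.toFinset_card_of_nodup hnodup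
        rw [h1', hcard3] at this
        omega
      have hlen : p.length = 2 := by
        have := SimpleGraph.Walk.length_support p
        omega
      clear hsubf hsupf hne hint h1 hxMc hcard3 hlen3
      -- case on p to extract the middle vertex
      cases p with
      | nil => simp at hlen
      | cons h q =>
        cases q with
        | nil => simp at hlen
        | @cons c d e h' q' =>
          cases q' with
          | nil =>
            -- support = [a, c, b], middle vertex c; x ∈ support, x ≠ a, x ≠ b
            simp only [SimpleGraph.Walk.support_cons, SimpleGraph.Walk.support_nil,
              List.mem_cons, List.mem_singleton] at hx
            rcases hx with rfl | rfl | rfl | hfalse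
            · exact hva rfl
            · -- x = c : h : Adj a x, h' : Adj x b
              refine absurd ?_ (not_le.mpr hc)
              apply Finset.one_lt_card.mpr
              exact ⟨a, by simp [SimpleGraph.mem_neighborFinset, h.symm, haM],
                b, by simp [SimpleGraph.mem_neighborFinset, h', hbM], hab⟩
            · exact hvb rfl
            · cases hfalse
          | cons h'' q'' => simp at hlen
  · intro hnb F₁ F₂ h1 h2 _ _ hne
    have : ∃ v ∈ S, (v ∈ F₁ ∧ v ∉ F₂) ∨ (v ∈ F₂ ∧ v ∉ F₁) := by
      by_contra hcon
      push_neg at hcon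
      apply hne
      ext y
      simp only [Finset.mem_inter]
      constructor
      · rintro ⟨hy1, hyS⟩
        have := hcon y hyS
        tauto
      · rintro ⟨hy2, hyS⟩
        have := hcon y hyS
        tauto
    obtain ⟨v, hvS, hcase⟩ := this
    have hvM : v ∉ M := Finset.mem_compl.mp (hS hvS)
    rcases hcase with ⟨hv1, hv2⟩ | ⟨hv1, hv2⟩
    · obtain ⟨a, b, p, hcsp, hmiss, hhit⟩ :=
        csp_aux G M F₁ F₂ h2 v hvM (hnb v hvS) hv1 hv2
      exact ⟨a, b, p, hcsp, Or.inr ⟨hmiss, hhit⟩⟩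
    · obtain ⟨a, b, p, hcsp, hmiss, hhit⟩ :=
        csp_aux G M F₂ F₁ h1 v hvM (hnb v hvS) hv1 hv2
      exact ⟨a, b, p, hcsp, Or.inl ⟨hmiss, hhit⟩⟩
end

section
/- Let G be a finite simple connected graph with monitors M ⊆ V(G), non-monitors N = V(G) \ M, and CSP measurement paths being all simple paths between two distinct monitors with all internal vertices in N. Theorem (CSP sufficiency): if for every set V' ⊆ V(G) with |V'| ≤ k + 1 containing at most one monitor, every connected component of G − V' that contains a node of S also contains a monitor, then S ⊆ N is k-identifiable under CSP. -/
variable {V : Type*} [Fintype V] [DecidableEq V]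

namespace CSPAux

open SimpleGraph Walk

variable {G : SimpleGraph V} {M A : Finset V}

/-- The goal: a monitor-monitor simple path through `u`, with non-monitor internal
vertices, avoiding `A`. -/
def GoalPath (G : SimpleGraph V) (M A : Finset V) (u : V) : Prop :=
  ∃ a b, ∃ D : G.Walk a b, D.IsPath ∧ a ∈ M ∧ b ∈ M ∧ a ≠ b ∧
    (∀ x ∈ D.support, x ≠ a → x ≠ b → x ∉ M) ∧
    (∀ x ∈ D.support, x ∉ A) ∧ u ∈ D.support

lemma eq_junction {a m c : V} (W₁ : G.Walk a m) (W₂ : G.Walk m c)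
    (hp : (W₁.append W₂).IsPath) {x : V}
    (h₁ : x ∈ W₁.support) (h₂ : x ∈ W₂.support) : x = m := by
  rw [Walk.isPath_def, Walk.support_append] at hp
  have hd := List.disjoint_of_nodup_append hp
  by_contra hne
  have h₂' : x ∈ W₂.support.tail := by
    rw [W₂.support_eq_cons] at h₂
    rcases List.mem_cons.mp h₂ with h | h
    · exact absurd h hne
    · exact h
  exact hd h₁ h₂'

lemma eq_junction' {a c : V} {p : G.Walk a c} (hp : p.IsPath) {m : V} (hm : m ∈ p.support)
    {x : V} (h₁ : x ∈ (p.takeUntil m hm).support) (h₂ : x ∈ (p.dropUntil m hm).support) :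
    x = m :=
  eq_junction _ _ (by rw [Walk.take_spec]; exact hp) h₁ h₂

lemma append_isPath {a m c : V} {p : G.Walk a m} {q : G.Walk m c}
    (hp : p.IsPath) (hq : q.IsPath) (hpq : ∀ x ∈ p.support, x ∈ q.support → x = m) :
    (p.append q).IsPath := by
  rw [Walk.isPath_def, Walk.support_append]
  rw [Walk.isPath_def] at hp hq
  refine List.Nodup.append hp (hq.sublist (List.tail_sublist _)) ?_
  intro x hxp hxq
  have hxq' : x ∈ q.support := List.mem_of_mem_tail hxq
  have hx := hpq x hxp hxq'
  subst hx
  rw [q.support_eq_cons] at hq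
  exact (List.nodup_cons.mp hq).1 hxq

/-- Truncate a walk from a non-monitor to a monitor at its first monitor,
obtaining a simple path whose only monitor is its final endpoint. -/
lemma trunc : ∀ (u m : V) (q : G.Walk u m), u ∉ M → m ∈ M →
    ∃ m' ∈ M, ∃ q' : G.Walk u m', q'.IsPath ∧ (∀ x ∈ q'.support, x ∈ q.support) ∧
      (∀ x ∈ q'.support, x ≠ m' → x ∉ M) := by
  intro u m q
  induction q with
  | nil => intro hu hm; exact absurd hm hu
  | @cons u v m h p ih =>
    intro hu hm
    by_cases hv : v ∈ M
    · refine ⟨v, hv, Walk.cons h Walk.nil, ?_, ?_, ?_⟩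
      · rw [Walk.cons_isPath_iff]
        exact ⟨Walk.IsPath.nil, by simp [h.ne]⟩
      · intro x hx
        rw [Walk.support_cons, Walk.support_nil] at hx
        rw [Walk.support_cons]
        rcases List.mem_cons.mp hx with h1 | h1
        · subst h1; exact List.mem_cons_self
        · simp only [List.mem_singleton] at h1
          subst h1; exact List.mem_cons_of_mem _ p.start_mem_support
      · intro x hx hxb
        rw [Walk.support_cons, Walk.support_nil] at hx
        rcases List.mem_cons.mp hx with h1 | h1
        · subst h1; exact hu
        · simp only [List.mem_singleton] at h1; exact absurd h1 hxb
    · obtain ⟨m', hm', q', hq'p, hq's, hq'M⟩ := ih hv hm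
      by_cases huq : u ∈ q'.support
      · refine ⟨m', hm', q'.dropUntil u huq, hq'p.dropUntil huq, ?_, ?_⟩
        · intro x hx
          have hx' := Walk.support_dropUntil_subset q' huq hx
          rw [Walk.support_cons]
          exact List.mem_cons_of_mem _ (hq's x hx')
        · intro x hx
          exact hq'M x (Walk.support_dropUntil_subset q' huq hx)
      · refine ⟨m', hm', Walk.cons h q', hq'p.cons huq, ?_, ?_⟩
        · intro x hx
          rw [Walk.support_cons] at hx ⊢
          rcases List.mem_cons.mp hx with h1 | h1
          · subst h1; exact List.mem_cons_self
          · exact List.mem_cons_of_mem _ (hq's x h1)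
        · intro x hx hxm
          rw [Walk.support_cons] at hx
          rcases List.mem_cons.mp hx with h1 | h1
          · subst h1; exact hu
          · exact hq'M x h1 hxm

/-- Either a walk avoids a (decidable) vertex set, or it decomposes at the
first vertex of the set it meets. -/
lemma firstMeet (Sset : V → Prop) [DecidablePred Sset] :
    ∀ (u c : V) (R : G.Walk u c),
      (∀ x ∈ R.support, ¬ Sset x) ∨
      ∃ z, Sset z ∧ ∃ (W₁ : G.Walk u z) (W₂ : G.Walk z c), W₁.append W₂ = R ∧
        (∀ x ∈ W₁.support, x ≠ z → ¬ Sset x) := by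
  intro u c R
  induction R with
  | nil =>
    rename_i u
    by_cases hu : Sset u
    · right
      refine ⟨u, hu, Walk.nil, Walk.nil, rfl, ?_⟩
      intro x hx hxz
      rw [Walk.support_nil, List.mem_singleton] at hx
      exact absurd hx hxz
    · left
      intro x hx
      rw [Walk.support_nil, List.mem_singleton] at hx
      exact hx ▸ hu
  | @cons u v c h p ih =>
    by_cases ha : Sset u
    · right
      refine ⟨u, ha, Walk.nil, Walk.cons h p, rfl, ?_⟩
      intro x hx hxz
      rw [Walk.support_nil, List.mem_singleton] at hx
      exact absurd hx hxz
    · rcases ih with hl | ⟨z, hz, W₁, W₂, heq, hpre⟩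
      · left
        intro x hx
        rw [Walk.support_cons] at hx
        rcases List.mem_cons.mp hx with h1 | h1
        · exact h1 ▸ ha
        · exact hl x h1
      · right
        refine ⟨z, hz, Walk.cons h W₁, W₂, by rw [Walk.cons_append, heq], ?_⟩
        intro x hx hxz
        rw [Walk.support_cons] at hx
        rcases List.mem_cons.mp hx with h1 | h1
        · exact h1 ▸ ha
        · exact hpre x h1 hxz

/-- Glue lemma: given a monitor-monitor path split as `t ++ d` at `w`, a fresh path
`R` from a neighbour `u` of `w`, decomposed at the first meeting vertex `z ∈ d`,
build a monitor-monitor path through `u`. -/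
lemma glue {α β w u m₃ : V} {t : G.Walk α w} {d : G.Walk w β} {R : G.Walk u m₃}
    (ht : t.IsPath) (hd : d.IsPath)
    (htd : ∀ x ∈ t.support, x ∈ d.support → x = w)
    (hαM : α ∈ M) (hβM : β ∈ M) (hαβ : α ≠ β)
    (htM : ∀ x ∈ t.support, x ≠ α → x ∉ M)
    (hdM : ∀ x ∈ d.support, x ≠ β → x ∉ M)
    (htA : ∀ x ∈ t.support, x ∉ A) (hdA : ∀ x ∈ d.support, x ∉ A)
    (hwM : w ∉ M)
    (hRp : R.IsPath) (hm₃ : m₃ ∈ M)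
    (hRM : ∀ x ∈ R.support, x ≠ m₃ → x ∉ M)
    (hRA : ∀ x ∈ R.support, x ∉ A)
    (hadj : G.Adj w u)
    (hwR : w ∉ R.support) (hut : u ∉ t.support) (hud : u ∉ d.support)
    {z : V} {W₁ : G.Walk u z} {W₂ : G.Walk z m₃} (heq : W₁.append W₂ = R)
    (hzd : z ∈ d.support)
    (hpre : ∀ x ∈ W₁.support, x ≠ z → x ∉ t.support ∧ x ∉ d.support) :
    GoalPath G M A u := by
  have hRp' : (W₁.append W₂).IsPath := by rw [heq]; exact hRp
  have hW₁sub : ∀ x ∈ W₁.support, x ∈ R.support := by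
    intro x hx
    rw [← heq]
    exact (Walk.mem_support_append_iff _ _).mpr (Or.inl hx)
  have hW₁p : W₁.IsPath := hRp'.of_append_left
  have hzR : z ∈ R.support := hW₁sub z W₁.end_mem_support
  have hzw : z ≠ w := fun hh => hwR (hh ▸ hzR)
  have hzt : z ∉ t.support := fun hh => hzw (htd z hh hzd)
  set dd := d.dropUntil z hzd with hdd
  have hddsub : ∀ x ∈ dd.support, x ∈ d.support := fun x hx =>
    Walk.support_dropUntil_subset d hzd hx
  have hwdd : w ∉ dd.support := by
    intro hw
    exact hzw ((eq_junction' hd hzd (d.takeUntil z hzd).start_mem_support hw).symm)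
  have hwW₁ : w ∉ W₁.support := fun hh => hwR (hW₁sub w hh)
  have hinner : (Walk.cons hadj W₁).IsPath := hW₁p.cons hwW₁
  have hmid : ((Walk.cons hadj W₁).append dd).IsPath := by
    refine append_isPath hinner (hd.dropUntil hzd) ?_
    intro x hx hxdd
    rw [Walk.support_cons] at hx
    rcases List.mem_cons.mp hx with h1 | h1
    · exact absurd (h1 ▸ hxdd) hwdd
    · by_contra hxz
      exact (hpre x h1 hxz).2 (hddsub x hxdd)
  have hD : (t.append ((Walk.cons hadj W₁).append dd)).IsPath := by
    refine append_isPath ht hmid ?_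
    intro x hxt hxm
    rcases (Walk.mem_support_append_iff _ _).mp hxm with h1 | h1
    · rw [Walk.support_cons] at h1
      rcases List.mem_cons.mp h1 with h2 | h2
      · exact h2
      · by_cases hxz : x = z
        · exact absurd (hxz ▸ hxt) hzt
        · exact absurd hxt (hpre x h2 hxz).1
    · exact htd x hxt (hddsub x h1)
  refine ⟨α, β, t.append ((Walk.cons hadj W₁).append dd), hD, hαM, hβM, hαβ, ?_, ?_, ?_⟩
  · intro x hx hxα hxβ
    rcases (Walk.mem_support_append_iff _ _).mp hx with h1 | h1
    · exact htM x h1 hxα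
    · rcases (Walk.mem_support_append_iff _ _).mp h1 with h2 | h2
      · rw [Walk.support_cons] at h2
        rcases List.mem_cons.mp h2 with h3 | h3
        · exact h3 ▸ hwM
        · by_cases hxz : x = z
          · exact hdM x (hxz ▸ hzd) hxβ
          · have hxm₃ : x ≠ m₃ := by
              intro hh
              exact hxz (eq_junction W₁ W₂ hRp' (hh ▸ h3) (hh ▸ W₂.end_mem_support))
            exact hRM x (hW₁sub x h3) hxm₃
      · exact hdM x (hddsub x h2) hxβ
  · intro x hx
    rcases (Walk.mem_support_append_iff _ _).mp hx with h1 | h1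
    · exact htA x h1
    · rcases (Walk.mem_support_append_iff _ _).mp h1 with h2 | h2
      · rw [Walk.support_cons] at h2
        rcases List.mem_cons.mp h2 with h3 | h3
        · exact h3 ▸ htA w t.end_mem_support
        · exact hRA x (hW₁sub x h3)
      · exact hdA x (hddsub x h2)
  · refine (Walk.mem_support_append_iff _ _).mpr (Or.inr ?_)
    refine (Walk.mem_support_append_iff _ _).mpr (Or.inl ?_)
    rw [Walk.support_cons]
    exact List.mem_cons_of_mem _ W₁.start_mem_support

/-- The key inductive step: walking along a monitor-avoiding path from `u` to a
monitor, at every vertex we can reroute; conclude there is a monitor-monitor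
path through `u`. -/
lemma step :
    ∀ (u m : V) (Q : G.Walk u m), Q.IsPath → m ∈ M → u ∉ M →
      (∀ x ∈ Q.support, x ∉ A) → (∀ x ∈ Q.support, x ≠ m → x ∉ M) →
      (∀ v ∈ Q.support, v ≠ u → ∃ m' ∈ M, ∃ R : G.Walk u m', R.IsPath ∧
         (∀ x ∈ R.support, x ∉ A) ∧ (∀ x ∈ R.support, x ≠ m' → x ∉ M) ∧ v ∉ R.support) →
      GoalPath G M A u := by
  intro u m Q
  induction Q with
  | nil => intro _ hm hu; exact absurd hm hu
  | @cons a b c h p ih =>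
    intro hQp hc ha hQA hQM Hb
    have hb_mem : b ∈ (Walk.cons h p).support := by
      rw [Walk.support_cons]; exact List.mem_cons_of_mem _ p.start_mem_support
    by_cases hbM : b ∈ M
    · -- base case: b must equal the final monitor c
      obtain ⟨m₃, hm₃, R, hRp, hRA, hRM, hbR⟩ := Hb b hb_mem h.ne'
      refine ⟨b, m₃, Walk.cons h.symm R, hRp.cons hbR, hbM, hm₃, ?_, ?_, ?_, ?_⟩
      · intro hh; exact hbR (hh ▸ R.end_mem_support)
      · intro x hx hxb hxm
        rw [Walk.support_cons] at hx
        rcases List.mem_cons.mp hx with h1 | h1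
        · exact absurd h1 hxb
        · exact hRM x h1 hxm
      · intro x hx
        rw [Walk.support_cons] at hx
        rcases List.mem_cons.mp hx with h1 | h1
        · exact h1 ▸ hQA b hb_mem
        · exact hRA x h1
      · rw [Walk.support_cons]
        exact List.mem_cons_of_mem _ R.start_mem_support
    · have haP : a ∉ p.support := ((Walk.cons_isPath_iff h p).mp hQp).2
      have hpp : p.IsPath := ((Walk.cons_isPath_iff h p).mp hQp).1
      have hmem : ∀ x ∈ p.support, x ∈ (Walk.cons h p).support := by
        intro x hx
        rw [Walk.support_cons]; exact List.mem_cons_of_mem _ hx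
      have Hb' : ∀ v ∈ p.support, v ≠ b → ∃ m' ∈ M, ∃ R : G.Walk b m', R.IsPath ∧
          (∀ x ∈ R.support, x ∉ A) ∧ (∀ x ∈ R.support, x ≠ m' → x ∉ M) ∧ v ∉ R.support := by
        intro v hv hvb
        have hva : v ≠ a := fun hh => haP (hh ▸ hv)
        obtain ⟨m', hm', R, hRp, hRA, hRM, hvR⟩ := Hb v (hmem v hv) hva
        obtain ⟨m'', hm'', R', hR'p, hR's, hR'M⟩ := trunc b m' (Walk.cons h.symm R) hbM hm'
        have hR'sub : ∀ x ∈ R'.support, x = b ∨ x ∈ R.support := by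
          intro x hx
          have := hR's x hx
          rw [Walk.support_cons] at this
          exact List.mem_cons.mp this
        refine ⟨m'', hm'', R', hR'p, ?_, hR'M, ?_⟩
        · intro x hx
          rcases hR'sub x hx with h1 | h1
          · exact h1 ▸ hQA b hb_mem
          · exact hRA x h1
        · intro hvR'
          rcases hR'sub v hvR' with h1 | h1
          · exact hvb h1
          · exact hvR h1
      obtain ⟨α, β, D, hDp, hαM, hβM, hαβ, hDM, hDA, hbD⟩ :=
        ih hpp hc hbM (fun x hx => hQA x (hmem x hx)) (fun x hx => hQM x (hmem x hx)) Hb'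
      by_cases haD : a ∈ D.support
      · exact ⟨α, β, D, hDp, hαM, hβM, hαβ, hDM, hDA, haD⟩
      · obtain ⟨m₃, hm₃, R, hRp, hRA, hRM, hbR⟩ := Hb b hb_mem h.ne'
        -- split D at b
        set t := D.takeUntil b hbD with hti
        set d := D.dropUntil b hbD with hdi
        have htsub : ∀ x ∈ t.support, x ∈ D.support := fun x hx =>
          Walk.support_takeUntil_subset D hbD hx
        have hdsub : ∀ x ∈ d.support, x ∈ D.support := fun x hx =>
          Walk.support_dropUntil_subset D hbD hx
        have hbα : b ≠ α := fun hh => hbM (hh ▸ hαM)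
        have hbβ : b ≠ β := fun hh => hbM (hh ▸ hβM)
        have htd : ∀ x ∈ t.support, x ∈ d.support → x = b := fun x hx hx' =>
          eq_junction' hDp hbD hx hx'
        have hβt : β ∉ t.support := by
          intro hh
          exact hbβ ((htd β hh d.end_mem_support).symm)
        have hαd : α ∉ d.support := by
          intro hh
          exact hbα ((htd α t.start_mem_support hh).symm)
        have htM : ∀ x ∈ t.support, x ≠ α → x ∉ M := by
          intro x hx hxα
          have hxβ : x ≠ β := fun hh => hβt (hh ▸ hx)
          exact hDM x (htsub x hx) hxα hxβ
        have hdM : ∀ x ∈ d.support, x ≠ β → x ∉ M := by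
          intro x hx hxβ
          have hxα : x ≠ α := fun hh => hαd (hh ▸ hx)
          exact hDM x (hdsub x hx) hxα hxβ
        have htA : ∀ x ∈ t.support, x ∉ A := fun x hx => hDA x (htsub x hx)
        have hdA : ∀ x ∈ d.support, x ∉ A := fun x hx => hDA x (hdsub x hx)
        have htp : t.IsPath := hDp.takeUntil hbD
        have hdp : d.IsPath := hDp.dropUntil hbD
        have hat : a ∉ t.support := fun hh => haD (htsub a hh)
        have had : a ∉ d.support := fun hh => haD (hdsub a hh)
        rcases firstMeet (fun x => x ∈ D.support) a m₃ R with hnone | ⟨z, hzD, W₁, W₂, heq, hpre⟩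
        · -- R misses D entirely: attach it to t
          have hbRc : b ∉ R.support := hbR
          have hmidp : (Walk.cons h.symm R).IsPath := hRp.cons hbRc
          have hDR : (t.append (Walk.cons h.symm R)).IsPath := by
            refine append_isPath htp hmidp ?_
            intro x hxt hxm
            rw [Walk.support_cons] at hxm
            rcases List.mem_cons.mp hxm with h1 | h1
            · exact h1
            · exact (hnone x h1 (htsub x hxt)).elim
          refine ⟨α, m₃, t.append (Walk.cons h.symm R), hDR, hαM, hm₃, ?_, ?_, ?_, ?_⟩
          · intro hh
            exact hnone m₃ R.end_mem_support (hh ▸ (htsub α t.start_mem_support))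
          · intro x hx hxα hxm₃
            rcases (Walk.mem_support_append_iff _ _).mp hx with h1 | h1
            · exact htM x h1 hxα
            · rw [Walk.support_cons] at h1
              rcases List.mem_cons.mp h1 with h2 | h2
              · exact h2 ▸ hbM
              · exact hRM x h2 hxm₃
          · intro x hx
            rcases (Walk.mem_support_append_iff _ _).mp hx with h1 | h1
            · exact htA x h1
            · rw [Walk.support_cons] at h1
              rcases List.mem_cons.mp h1 with h2 | h2
              · exact h2 ▸ hQA b hb_mem
              · exact hRA x h2
          · refine (Walk.mem_support_append_iff _ _).mpr (Or.inr ?_)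
            rw [Walk.support_cons]
            exact List.mem_cons_of_mem _ R.start_mem_support
        · -- R meets D first at z
          have hzD' : z ∈ (t.append d).support := by
            rw [hti, hdi, Walk.take_spec]
            exact hzD
          have hpre' : ∀ x ∈ W₁.support, x ≠ z → x ∉ t.support ∧ x ∉ d.support := by
            intro x hx hxz
            have hnx := hpre x hx hxz
            constructor
            · exact fun hh => hnx (htsub x hh)
            · exact fun hh => hnx (hdsub x hh)
          rcases (Walk.mem_support_append_iff _ _).mp hzD' with hzt | hzd
          · -- z lies in t: apply glue to the reversed decomposition
            have hrev : ∀ x ∈ W₁.support, x ≠ z →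
                x ∉ d.reverse.support ∧ x ∉ t.reverse.support := by
              intro x hx hxz
              have hnx := hpre' x hx hxz
              rw [Walk.support_reverse, Walk.support_reverse]
              simp only [List.mem_reverse]
              exact ⟨hnx.2, hnx.1⟩
            refine glue (A := A) hdp.reverse htp.reverse ?_ hβM hαM hαβ.symm
              ?_ ?_ ?_ ?_ hbM hRp hm₃ hRM hRA h.symm hbR ?_ ?_ heq ?_ hrev
            · intro x hx hx'
              rw [Walk.support_reverse, List.mem_reverse] at hx hx'
              exact htd x hx' hx
            · intro x hx hxβ
              rw [Walk.support_reverse, List.mem_reverse] at hx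
              exact hdM x hx hxβ
            · intro x hx hxα
              rw [Walk.support_reverse, List.mem_reverse] at hx
              exact htM x hx hxα
            · intro x hx
              rw [Walk.support_reverse, List.mem_reverse] at hx
              exact hdA x hx
            · intro x hx
              rw [Walk.support_reverse, List.mem_reverse] at hx
              exact htA x hx
            · rw [Walk.support_reverse, List.mem_reverse]; exact had
            · rw [Walk.support_reverse, List.mem_reverse]; exact hat
            · rw [Walk.support_reverse, List.mem_reverse]; exact hzt
          · exact glue (A := A) htp hdp htd hαM hβM hαβ htM hdM htA hdA hbM hRp hm₃ hRM hRA
              h.symm hbR hat had heq hzd hpre'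

end CSPAux

theorem CSP_sufficiency (G : SimpleGraph V) (hG : G.Connected) (M S : Finset V)
    (hS : S ⊆ Mᶜ) (k : ℕ)
    (h : ∀ V' : Finset V, V'.card ≤ k + 1 → (V' ∩ M).card ≤ 1 →
      ∀ s ∈ S, s ∉ V' → ∃ m ∈ M, ∃ q : G.Walk s m, ∀ x ∈ q.support, x ∉ V') :
    cspIdent G M S k := by
  intro F₁ F₂ hF₁ hF₂ hc₁ hc₂ hne
  have key : ∀ Fa Fb : Finset V, Fb ⊆ Mᶜ → Fb.card ≤ k → ∀ s ∈ S, s ∈ Fa → s ∉ Fb →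
      ∃ a b, ∃ p : G.Walk a b, IsCSPPath G M p ∧ (∀ x ∈ p.support, x ∉ Fb) ∧
        ¬(∀ x ∈ p.support, x ∉ Fa) := by
    intro Fa Fb hFb hcb s hsS hsa hsb
    have hsM : s ∉ M := by simpa using hS hsS
    have hFbM : Fb ∩ M = ∅ := by
      ext x
      simp only [Finset.mem_inter, Finset.notMem_empty, iff_false, not_and]
      intro hx
      simpa using hFb hx
    obtain ⟨m0, hm0, W, hW⟩ := h Fb (hcb.trans (Nat.le_succ k)) (by rw [hFbM]; simp) s hsS hsb
    obtain ⟨m1, hm1, P, hPp, hPs, hPM⟩ := CSPAux.trunc s m0 W hsM hm0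
    have hPA : ∀ x ∈ P.support, x ∉ Fb := fun x hx => hW x (hPs x hx)
    have Hb : ∀ v ∈ P.support, v ≠ s → ∃ m' ∈ M, ∃ R : G.Walk s m', R.IsPath ∧
        (∀ x ∈ R.support, x ∉ Fb) ∧ (∀ x ∈ R.support, x ≠ m' → x ∉ M) ∧ v ∉ R.support := by
      intro v hv hvs
      have hcard : (insert v Fb).card ≤ k + 1 := by
        calc (insert v Fb).card ≤ Fb.card + 1 := Finset.card_insert_le _ _
        _ ≤ k + 1 := by omega
      have hmon : ((insert v Fb) ∩ M).card ≤ 1 := by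
        have hsub : (insert v Fb) ∩ M ⊆ {v} := by
          intro x hx
          rw [Finset.mem_inter, Finset.mem_insert] at hx
          rcases hx.1 with h1 | h1
          · simpa using h1
          · exact absurd (Finset.mem_inter.mpr ⟨h1, hx.2⟩) (by rw [hFbM]; simp)
        calc ((insert v Fb) ∩ M).card ≤ ({v} : Finset V).card := Finset.card_le_card hsub
        _ = 1 := Finset.card_singleton v
      have hsnot : s ∉ insert v Fb := by
        rw [Finset.mem_insert]
        rintro (h1 | h1)
        · exact hvs h1.symm
        · exact hsb h1
      obtain ⟨m', hm', W', hW'⟩ := h (insert v Fb) hcard hmon s hsS hsnot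
      obtain ⟨m'', hm'', R, hRp, hRs, hRM⟩ := CSPAux.trunc s m' W' hsM hm'
      refine ⟨m'', hm'', R, hRp, ?_, hRM, ?_⟩
      · intro x hx
        have := hW' x (hRs x hx)
        rw [Finset.mem_insert] at this
        push_neg at this
        exact this.2
      · intro hvR
        exact hW' v (hRs v hvR) (Finset.mem_insert_self v Fb)
    obtain ⟨a, b, D, hDp, haM, hbM2, hab, hDM, hDA, hsD⟩ :=
      CSPAux.step (A := Fb) s m1 P hPp hm1 hsM hPA hPM Hb
    exact ⟨a, b, D, ⟨hDp, haM, hbM2, hab, hDM⟩, hDA, fun hall => hall s hsD hsa⟩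
  have hex : ∃ s, s ∈ S ∧ ((s ∈ F₁ ∧ s ∉ F₂) ∨ (s ∈ F₂ ∧ s ∉ F₁)) := by
    by_contra hcon
    push_neg at hcon
    apply hne
    ext x
    simp only [Finset.mem_inter]
    constructor
    · rintro ⟨h1, h2⟩
      obtain ⟨ha, hb⟩ := hcon x h2
      exact ⟨ha h1, h2⟩
    · rintro ⟨h1, h2⟩
      obtain ⟨ha, hb⟩ := hcon x h2
      exact ⟨hb h1, h2⟩
  obtain ⟨s, hsS, hcase⟩ := hex
  rcases hcase with ⟨h1, h2⟩ | ⟨h1, h2⟩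
  · obtain ⟨a, b, p, hcsp, hB, hA⟩ := key F₁ F₂ hF₂ hc₂ s hsS h1 h2
    exact ⟨a, b, p, hcsp, Or.inr ⟨hB, hA⟩⟩
  · obtain ⟨a, b, p, hcsp, hB, hA⟩ := key F₂ F₁ hF₁ hc₁ s hsS h1 h2
    exact ⟨a, b, p, hcsp, Or.inl ⟨hB, hA⟩⟩
end

section
/- Let G be a finite simple connected graph with monitors M, non-monitors N, σ = |N|, and CSP paths as all simple monitor-to-monitor paths with non-monitor internal vertices. If every node of N except a single node v ∈ S has at least two monitor neighbors, v has at least one monitor neighbor, and v is adjacent to every other non-monitor, then S ⊆ N is (σ−1)-identifiable under CSP. -/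
variable {V : Type*} [Fintype V] [DecidableEq V]

lemma notinM {M : Finset V} {x : V} (hx : x ∈ Mᶜ) : x ∉ M := by
  simpa using hx

/-- two-hop CSP path m₁ - u - m₂ -/
lemma csp_two (G : SimpleGraph V) (M : Finset V) {u m₁ m₂ : V}
    (h₁ : G.Adj m₁ u) (h₂ : G.Adj u m₂) (hm₁ : m₁ ∈ M) (hm₂ : m₂ ∈ M)
    (hmm : m₁ ≠ m₂) (hu : u ∉ M) :
    ∃ p : G.Walk m₁ m₂, IsCSPPath G M p ∧ p.support = [m₁, u, m₂] := by
  have hum₁ : u ≠ m₁ := fun h => hu (h ▸ hm₁)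
  have hum₂ : u ≠ m₂ := fun h => hu (h ▸ hm₂)
  refine ⟨SimpleGraph.Walk.cons h₁ (SimpleGraph.Walk.cons h₂ SimpleGraph.Walk.nil), ⟨?_, hm₁, hm₂, hmm, ?_⟩, rfl⟩
  · rw [SimpleGraph.Walk.isPath_def]
    simp [hmm, hum₁.symm, hum₂]
  · intro x hx hx1 hx2
    simp only [SimpleGraph.Walk.support_cons, SimpleGraph.Walk.support_nil,
      List.mem_cons, List.mem_singleton] at hx
    rcases hx with h | h | h | h
    · exact absurd h hx1
    · exact h ▸ hu
    · exact absurd h hx2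
    · exact absurd h List.not_mem_nil

/-- three-hop CSP path m - v - w - m' -/
lemma csp_three (G : SimpleGraph V) (M : Finset V) {v w m m' : V}
    (h₁ : G.Adj m v) (h₂ : G.Adj v w) (h₃ : G.Adj w m')
    (hm : m ∈ M) (hm' : m' ∈ M) (hmm : m ≠ m') (hv : v ∉ M) (hw : w ∉ M) :
    ∃ p : G.Walk m m', IsCSPPath G M p ∧ p.support = [m, v, w, m'] := by
  have hvm : v ≠ m := fun h => hv (h ▸ hm)
  have hvm' : v ≠ m' := fun h => hv (h ▸ hm')
  have hwm : w ≠ m := fun h => hw (h ▸ hm)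
  have hwm' : w ≠ m' := fun h => hw (h ▸ hm')
  have hvw : v ≠ w := h₂.ne
  refine ⟨SimpleGraph.Walk.cons h₁ (SimpleGraph.Walk.cons h₂
      (SimpleGraph.Walk.cons h₃ SimpleGraph.Walk.nil)), ⟨?_, hm, hm', hmm, ?_⟩, rfl⟩
  · rw [SimpleGraph.Walk.isPath_def]
    simp [hmm, hvm.symm, hwm.symm, hvw, hvm', hwm']
  · intro x hx hx1 hx2
    simp only [SimpleGraph.Walk.support_cons, SimpleGraph.Walk.support_nil,
      List.mem_cons, List.mem_singleton] at hx
    rcases hx with h | h | h | h | h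
    · exact absurd h hx1
    · exact h ▸ hv
    · exact h ▸ hw
    · exact absurd h hx2
    · exact absurd h List.not_mem_nil

lemma key (G : SimpleGraph V) [DecidableRel G.Adj] (M : Finset V) (v : V)
    (hothers : ∀ u ∈ Mᶜ, u ≠ v → 2 ≤ (G.neighborFinset u ∩ M).card)
    (hv1 : 1 ≤ (G.neighborFinset v ∩ M).card)
    (hvadj : ∀ u ∈ Mᶜ, u ≠ v → G.Adj v u)
    (F₁ F₂ : Finset V) (hF₁ : F₁ ⊆ Mᶜ) (hF₂ : F₂ ⊆ Mᶜ)
    (hc₁ : F₁.card ≤ Mᶜ.card - 1)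
    (u : V) (huM : u ∈ Mᶜ) (hu1 : u ∈ F₁) (hu2 : u ∉ F₂) :
    ∃ (a b : V) (p : G.Walk a b), IsCSPPath G M p ∧
      Xor' (∀ x ∈ p.support, x ∉ F₁) (∀ x ∈ p.support, x ∉ F₂) := by
  by_cases huv : u = v
  · subst huv
    by_cases hw : ∃ w ∈ Mᶜ, w ≠ u ∧ w ∉ F₂
    · -- path m - u - w - m'
      obtain ⟨w, hwM, hwu, hwF⟩ := hw
      obtain ⟨m, hm⟩ := Finset.card_pos.mp hv1
      rw [Finset.mem_inter, SimpleGraph.mem_neighborFinset] at hm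
      obtain ⟨m', hm', hmm'⟩ := Finset.exists_mem_ne
        (lt_of_lt_of_le one_lt_two (hothers w hwM hwu)) m
      rw [Finset.mem_inter, SimpleGraph.mem_neighborFinset] at hm'
      obtain ⟨p, hp, hsup⟩ := csp_three G M hm.1.symm (hvadj w hwM hwu) hm'.1
        hm.2 hm'.2 (Ne.symm hmm') (notinM huM) (notinM hwM)
      refine ⟨m, m', p, hp, Or.inr ⟨?_, ?_⟩⟩
      · intro x hx
        rw [hsup] at hx
        simp only [List.mem_cons, List.not_mem_nil, or_false] at hx
        rcases hx with h | h | h | h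
        · exact h ▸ fun hc => notinM (hF₂ hc) hm.2
        · exact h ▸ hu2
        · exact h ▸ hwF
        · exact h ▸ fun hc => notinM (hF₂ hc) hm'.2
      · intro hall
        exact hall u (by rw [hsup]; simp) hu1
    · -- every non-monitor other than u is in F₂; pick w ∈ Mᶜ \ F₁
      push_neg at hw
      have hlt : F₁.card < Mᶜ.card :=
        lt_of_le_of_lt hc₁ (Nat.sub_lt (Finset.card_pos.mpr ⟨u, huM⟩) one_pos)
      have hss : F₁ ⊂ Mᶜ := hF₁.ssubset_of_ne (fun h => absurd (h ▸ hlt) (lt_irrefl _))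
      obtain ⟨w, hwM, hwF₁⟩ := Finset.exists_of_ssubset hss
      have hwu : w ≠ u := fun h => hwF₁ (h ▸ hu1)
      have hwF₂ : w ∈ F₂ := hw w hwM hwu
      obtain ⟨m₁, hm₁, m₂, hm₂, hmm⟩ := Finset.one_lt_card.mp
        (lt_of_lt_of_le one_lt_two (hothers w hwM hwu))
      rw [Finset.mem_inter, SimpleGraph.mem_neighborFinset] at hm₁ hm₂
      obtain ⟨p, hp, hsup⟩ := csp_two G M hm₁.1.symm hm₂.1 hm₁.2 hm₂.2 hmm (notinM hwM)
      refine ⟨m₁, m₂, p, hp, Or.inl ⟨?_, ?_⟩⟩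
      · intro x hx
        rw [hsup] at hx
        simp only [List.mem_cons, List.not_mem_nil, or_false] at hx
        rcases hx with h | h | h
        · exact h ▸ fun hc => notinM (hF₁ hc) hm₁.2
        · exact h ▸ hwF₁
        · exact h ▸ fun hc => notinM (hF₁ hc) hm₂.2
      · intro hall
        exact hall w (by rw [hsup]; simp) hwF₂
  · -- u ≠ v : two-hop path through u
    obtain ⟨m₁, hm₁, m₂, hm₂, hmm⟩ := Finset.one_lt_card.mp
      (lt_of_lt_of_le one_lt_two (hothers u huM huv))
    rw [Finset.mem_inter, SimpleGraph.mem_neighborFinset] at hm₁ hm₂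
    obtain ⟨p, hp, hsup⟩ := csp_two G M hm₁.1.symm hm₂.1 hm₁.2 hm₂.2 hmm (notinM huM)
    refine ⟨m₁, m₂, p, hp, Or.inr ⟨?_, ?_⟩⟩
    · intro x hx
      rw [hsup] at hx
      simp only [List.mem_cons, List.not_mem_nil, or_false] at hx
      rcases hx with h | h | h
      · exact h ▸ fun hc => notinM (hF₂ hc) hm₁.2
      · exact h ▸ hu2
      · exact h ▸ fun hc => notinM (hF₂ hc) hm₂.2
    · intro hall
      exact hall u (by rw [hsup]; simp) hu1

theorem sigma_minus_one_identifiable_CSP (G : SimpleGraph V) [DecidableRel G.Adj]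
    (hG : G.Connected) (M S : Finset V) (hS : S ⊆ Mᶜ) (v : V) (hvS : v ∈ S)
    (hothers : ∀ u ∈ Mᶜ, u ≠ v → 2 ≤ (G.neighborFinset u ∩ M).card)
    (hv1 : 1 ≤ (G.neighborFinset v ∩ M).card)
    (hvadj : ∀ u ∈ Mᶜ, u ≠ v → G.Adj v u) :
    cspIdent G M S (Mᶜ.card - 1) := by
  intro F₁ F₂ hF₁ hF₂ hc₁ hc₂ hne
  have hex : ∃ u, ¬ (u ∈ F₁ ∩ S ↔ u ∈ F₂ ∩ S) := by
    by_contra h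
    push_neg at h
    exact hne (Finset.ext fun a => (h a))
  obtain ⟨u, hu⟩ := hex
  simp only [Finset.mem_inter] at hu
  by_cases h1 : u ∈ F₁ ∩ S
  · rw [Finset.mem_inter] at h1
    have h2 : u ∉ F₂ := fun hc => hu ⟨fun _ => ⟨hc, h1.2⟩, fun _ => h1⟩
    exact key G M v hothers hv1 hvadj F₁ F₂ hF₁ hF₂ hc₁ u (hS h1.2) h1.1 h2
  · rw [Finset.mem_inter] at h1
    have h2 : u ∈ F₂ ∩ S := by
      by_contra hc
      rw [Finset.mem_inter] at hc
      exact hu ⟨fun ha => absurd ha h1, fun ha => absurd ha hc⟩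
    rw [Finset.mem_inter] at h2
    have h3 : u ∉ F₁ := fun hc => h1 ⟨hc, h2.2⟩
    obtain ⟨a, b, p, hp, hx⟩ := key G M v hothers hv1 hvadj F₂ F₁ hF₂ hF₁ hc₂ u (hS h2.2) h2.1 h3
    exact ⟨a, b, p, hp, hx.symm⟩
end

section
/- Let G be a finite simple connected graph with monitors M and non-monitors N, |N| = σ ≥ 2. If two distinct nodes u, v ∈ N each have at most one monitor neighbor, then N is not (σ−1)-identifiable under CSP. -/
variable {V : Type*} [Fintype V] [DecidableEq V]

/-!
Take the failure sets `N \ {v}` and `N \ {u}`, both of size `σ - 1`. A CSP path that survives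
`N \ {v}` has no internal vertex other than `v`; if it fails under `N \ {u}` it has some internal
vertex, so it is a path `a - v - b` between two distinct monitors, and `v` has two monitor
neighbours. Symmetrically for `u`, so no CSP path separates the two failure sets.
-/

namespace SimpleGraph.Walk

variable {G : SimpleGraph V} {a b w : V}

omit [Fintype V] [DecidableEq V] in
theorem IsPath.adj_of_forall_internal_eq {p : G.Walk a b} (hp : p.IsPath) (hw : w ∈ p.support)
    (hwa : w ≠ a) (hwb : w ≠ b) (hint : ∀ x ∈ p.support, x ≠ a → x ≠ b → x = w) :
    G.Adj a w ∧ G.Adj w b := by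
  obtain ⟨i, rfl, hil⟩ := mem_support_iff_exists_getVert.mp hw
  have hi0 : i ≠ 0 := fun h => hwa ((hp.getVert_eq_start_iff hil).2 h)
  have hil' : i ≠ p.length := fun h => hwb ((hp.getVert_eq_end_iff hil).2 h)
  have internal_eq : ∀ j, 0 < j → j < p.length → j = i := fun j hj0 hjl =>
    hp.getVert_injOn hjl.le hil <| hint _ (p.getVert_mem_support j)
      (fun h => by have := (hp.getVert_eq_start_iff hjl.le).1 h; omega)
      (fun h => by have := (hp.getVert_eq_end_iff hjl.le).1 h; omega)
  obtain rfl : 1 = i := internal_eq 1 (by omega) (by omega)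
  have hlen : p.length = 2 := by
    by_contra h
    have := internal_eq 2 (by omega) (by omega)
    omega
  refine ⟨by simpa using p.adj_getVert_succ (i := 0) (by omega), ?_⟩
  simpa [← hlen] using p.adj_getVert_succ (i := 1) (by omega)

end SimpleGraph.Walk

theorem IsCSPPath.two_le_card_neighborFinset_inter {G : SimpleGraph V} [DecidableRel G.Adj]
    {M : Finset V} {a b w x : V} {p : G.Walk a b} (hp : IsCSPPath G M p)
    (hsurv : ∀ y ∈ p.support, y ∉ Mᶜ.erase w) (hx : x ∈ p.support) (hxM : x ∉ M) :
    2 ≤ (G.neighborFinset w ∩ M).card := by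
  obtain ⟨hpath, haM, hbM, hab, hint⟩ := hp
  have internal_eq : ∀ y ∈ p.support, y ≠ a → y ≠ b → y = w := fun y hy hya hyb => by
    simpa [hint y hy hya hyb] using hsurv y hy
  have hxa : x ≠ a := by rintro rfl; exact hxM haM
  have hxb : x ≠ b := by rintro rfl; exact hxM hbM
  obtain rfl := internal_eq x hx hxa hxb
  obtain ⟨hadj_a, hadj_b⟩ := hpath.adj_of_forall_internal_eq hx hxa hxb internal_eq
  calc 2 = ({a, b} : Finset V).card := (Finset.card_pair hab).symm
    _ ≤ (G.neighborFinset x ∩ M).card := Finset.card_le_card <| by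
      simp [Finset.insert_subset_iff, haM, hbM, hadj_a.symm, hadj_b]

theorem two_weak_nodes_not_identifiable_general (G : SimpleGraph V) [DecidableRel G.Adj]
    (M : Finset V) (u v : V) (hu : u ∉ M) (hv : v ∉ M)
    (huv : u ≠ v)
    (hmu : (G.neighborFinset u ∩ M).card ≤ 1)
    (hmv : (G.neighborFinset v ∩ M).card ≤ 1) :
    ¬ cspIdent G M Mᶜ (Mᶜ.card - 1) := by
  intro hid
  have hdiff : Mᶜ.erase v ∩ Mᶜ ≠ Mᶜ.erase u ∩ Mᶜ := fun h => by
    simpa [huv, hu] using congrArg (u ∈ ·) h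
  obtain ⟨a, b, p, hp, hxor⟩ := hid _ _ (Mᶜ.erase_subset v) (Mᶜ.erase_subset u)
    (Finset.card_erase_of_mem (Finset.mem_compl.2 hv)).le
    (Finset.card_erase_of_mem (Finset.mem_compl.2 hu)).le hdiff
  rcases hxor with ⟨hsurv, hfail⟩ | ⟨hsurv, hfail⟩
  all_goals
    push Not at hfail
    obtain ⟨x, hx, hxF⟩ := hfail
    have := hp.two_le_card_neighborFinset_inter hsurv hx
      (Finset.mem_compl.1 (Finset.mem_of_mem_erase hxF))
    omega

theorem two_weak_nodes_not_identifiable (G : SimpleGraph V) [DecidableRel G.Adj]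
    (hG : G.Connected) (M : Finset V) (u v : V) (hu : u ∉ M) (hv : v ∉ M)
    (huv : u ≠ v) (hσ : 2 ≤ (Mᶜ : Finset V).card)
    (hmu : (G.neighborFinset u ∩ M).card ≤ 1)
    (hmv : (G.neighborFinset v ∩ M).card ≤ 1) :
    ¬ cspIdent G M Mᶜ (Mᶜ.card - 1) :=
  two_weak_nodes_not_identifiable_general G M u v hu hv huv hmu hmv
end
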